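/- arXiv:1106.0147 — 7 statements merged into one kernel-verified Lean document; each statement's English description precedes it below -/
import Mathlib

section
/- Let F be a field and let {P_1,…,P_r} be a stable weighted set over F (with n characteristic numbers per point). If there exists a partition λ = (1^{m_1(λ)} 2^{m_2(λ)} ⋯ n^{m_n(λ)}) of weight n such that m(λ) ≥ r, then Γ(λ) = ∑_{i=1}^r μ_i · a_λ^{(i)} = 0. -/
open Polynomial Finset

lemma moments_vanish {F : Type*} [Field F] (r : ℕ) (b x : Fin r → F)
    (h : ∀ k < r, ∑ i, b i * x i ^ k = 0) :
    ∀ k, ∑ i, b i * x i ^ k = 0 := by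
  rcases Nat.eq_zero_or_pos r with hr | hr
  · subst hr; intro k; simp
  intro k
  induction k using Nat.strong_induction_on with
  | _ k IH =>
  rcases lt_or_ge k r with hk | hk
  · exact h k hk
  set P : F[X] := ∏ i, (X - C (x i)) with hP
  have hmon : P.Monic := monic_prod_of_monic _ _ fun i _ => monic_X_sub_C _
  have hdeg : P.natDegree = r := by
    rw [hP, natDegree_prod_of_monic _ _ fun i _ => monic_X_sub_C _]
    simp
  have hpow : ∀ i, x i ^ r = -∑ l ∈ range r, P.coeff l * x i ^ l := by
    intro i
    have h0 : P.eval (x i) = 0 := by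
      rw [hP, eval_prod]
      exact Finset.prod_eq_zero (mem_univ i) (by simp)
    have := eval_eq_sum_range (p := P) (x := x i)
    rw [h0, hdeg, Finset.sum_range_succ] at this
    have hc : P.coeff r = 1 := by
      have := hmon.coeff_natDegree; rwa [hdeg] at this
    rw [hc, one_mul] at this
    linear_combination -this
  calc ∑ i, b i * x i ^ k
      = ∑ i, b i * (x i ^ (k - r) * x i ^ r) := by
        congr 1; funext i; rw [← pow_add, Nat.sub_add_cancel hk]
    _ = ∑ i, b i * (x i ^ (k - r) * (-∑ l ∈ range r, P.coeff l * x i ^ l)) := by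
        simp_rw [hpow]
    _ = -∑ l ∈ range r, P.coeff l * ∑ i, b i * x i ^ (k - r + l) := by
        simp_rw [mul_neg, Finset.sum_neg_distrib, neg_inj, Finset.mul_sum]
        rw [Finset.sum_comm]
        refine Finset.sum_congr rfl fun l _ => Finset.sum_congr rfl fun i _ => ?_
        rw [pow_add]; ring
    _ = 0 := by
        rw [neg_eq_zero]
        apply Finset.sum_eq_zero
        intro l hl
        have hl' := Finset.mem_range.mp hl
        rw [IH (k - r + l) (by omega), mul_zero]


/-- A weighted set over a field `F` with `r` points, each with coefficient `μ i` and
characteristic numbers `a i j` (`j = 1, …, n`, indexed by `Fin n`). A partition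
`λ = (1^{m 0} 2^{m 1} ⋯ n^{m (n-1)})` is a multiplicity vector `m : Fin n → ℕ`,
its weight is `∑ j, (j+1) * m j`, and `m(λ) = Finset.univ.sup m`.
Stability: `Γ(λ) = ∑ i, μ i * ∏ j, (a i j)^(m j) = 0` for all partitions of weight `< n`.

**Statement 0 (Proposition 1.1):** if `λ` has weight `n` and `m(λ) ≥ r`, then `Γ(λ) = 0`. -/
theorem stable_weighted_set_vanishing
    {F : Type*} [Field F] (n r : ℕ)
    (μ : Fin r → F) (a : Fin r → Fin n → F)
    (hstable : ∀ m : Fin n → ℕ, (∑ j, (j.1 + 1) * m j) < n →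
      ∑ i, μ i * ∏ j, (a i j) ^ (m j) = 0)
    (m : Fin n → ℕ)
    (hweight : (∑ j, (j.1 + 1) * m j) = n)
    (hmax : r ≤ Finset.univ.sup m) :
    ∑ i, μ i * ∏ j, (a i j) ^ (m j) = 0 := by
  rcases Nat.eq_zero_or_pos r with hr | hr
  · subst hr; simp
  have hne : (Finset.univ : Finset (Fin n)).Nonempty := by
    by_contra hne
    rw [Finset.not_nonempty_iff_eq_empty.mp hne] at hmax
    simp at hmax; omega
  obtain ⟨j₀, -, hj₀⟩ := Finset.exists_mem_eq_sup _ hne m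
  have hmj₀ : r ≤ m j₀ := by omega
  set b : Fin r → F := fun i => μ i * ∏ j ∈ Finset.univ.erase j₀, a i j ^ m j with hb
  have key : ∀ k, ∑ i, b i * a i j₀ ^ k = 0 := by
    apply moments_vanish
    intro k hk
    set m' : Fin n → ℕ := fun j => if j = j₀ then k else m j with hm'
    have hw' : (∑ j, (j.1 + 1) * m' j) < n := by
      have e1 : ∑ j, (j.1 + 1) * m' j
          = (j₀.1 + 1) * k + ∑ j ∈ Finset.univ.erase j₀, (j.1 + 1) * m j := by
        rw [← Finset.add_sum_erase _ _ (Finset.mem_univ j₀)]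
        simp only [hm', if_pos rfl]
        congr 1
        exact Finset.sum_congr rfl fun j hj => by
          rw [if_neg (Finset.ne_of_mem_erase hj)]
      have e2 := (Finset.add_sum_erase Finset.univ (fun j : Fin n => (j.1 + 1) * m j)
        (Finset.mem_univ j₀)).symm
      have : (j₀.1 + 1) * k < (j₀.1 + 1) * m j₀ :=
        Nat.mul_lt_mul_of_pos_left (lt_of_lt_of_le hk hmj₀) (Nat.succ_pos _)
      omega
    have := hstable m' hw'
    rw [← this]
    apply Finset.sum_congr rfl
    intro i _
    rw [hb, mul_assoc, mul_comm (∏ j ∈ Finset.univ.erase j₀, a i j ^ m j) (a i j₀ ^ k)]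
    congr 1
    rw [← Finset.mul_prod_erase _ _ (Finset.mem_univ j₀)]
    simp only [hm', if_pos rfl]
    congr 1
    exact Finset.prod_congr rfl fun j hj => by rw [if_neg (Finset.ne_of_mem_erase hj)]
  have := key (m j₀)
  rw [← this]
  apply Finset.sum_congr rfl
  intro i _
  rw [hb, ← Finset.mul_prod_erase Finset.univ (fun j => a i j ^ m j) (Finset.mem_univ j₀)]
  ring
end

section
/- Let F be a field and let {P_1,…,P_r} be a stable weighted set over F (with n characteristic numbers per point). If λ is a partition of weight n with Γ(λ) ≠ 0, then r ≥ m(λ) + 1. Equivalently, setting m := max{m(λ) : λ a partition of weight n with Γ(λ) ≠ 0}, one has r ≥ m + 1. -/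
open Polynomial Finset


/-- A weighted set over a field `F` with `r` points, each with coefficient `μ i` and
characteristic numbers `a i j` (`j = 1, …, n`, indexed by `Fin n`). A partition
`λ = (1^{m 0} 2^{m 1} ⋯ n^{m (n-1)})` is a multiplicity vector `m : Fin n → ℕ`,
its weight is `∑ j, (j+1) * m j`, and `m(λ) = Finset.univ.sup m`.
Stability: `Γ(λ) = ∑ i, μ i * ∏ j, (a i j)^(m j) = 0` for all partitions of weight `< n`.

**Statement 1 (Corollary 1.3):** if `λ` has weight `n` and `Γ(λ) ≠ 0`, then
`r ≥ m(λ) + 1`. -/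
theorem stable_weighted_set_card_lower_bound
    {F : Type*} [Field F] (n r : ℕ)
    (μ : Fin r → F) (a : Fin r → Fin n → F)
    (hstable : ∀ m : Fin n → ℕ, (∑ j, (j.1 + 1) * m j) < n →
      ∑ i, μ i * ∏ j, (a i j) ^ (m j) = 0)
    (m : Fin n → ℕ)
    (hweight : (∑ j, (j.1 + 1) * m j) = n)
    (hGamma : ∑ i, μ i * ∏ j, (a i j) ^ (m j) ≠ 0) :
    Finset.univ.sup m + 1 ≤ r := by
  by_contra h
  push_neg at h
  have hr : r ≤ Finset.univ.sup m := Nat.lt_succ_iff.mp h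
  have hn0 : 0 < n := by
    rcases Nat.eq_zero_or_pos n with h0 | h0
    · exfalso
      subst h0
      simp only [Finset.univ_eq_empty, Finset.sup_empty, Nat.bot_eq_zero, Nat.le_zero] at hr
      subst hr
      simp at hGamma
    · exact h0
  haveI : NeZero n := ⟨hn0.ne'⟩
  obtain ⟨j0, -, hj0⟩ := Finset.exists_mem_eq_sup (Finset.univ : Finset (Fin n))
    Finset.univ_nonempty m
  rw [hj0] at hr
  set x : Fin r → F := fun i => a i j0 with hxdef
  set p : F[X] := ∏ i, (X - C (x i)) with hpdef
  have hmon : p.Monic := monic_prod_of_monic _ _ fun i _ => monic_X_sub_C _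
  have hdeg : p.natDegree = r := by
    rw [hpdef, natDegree_prod_of_monic _ _ fun i _ => monic_X_sub_C _]
    simp [natDegree_X_sub_C]
  have hevalzero : ∀ i, p.eval (x i) = 0 := by
    intro i
    rw [hpdef, eval_prod]
    exact Finset.prod_eq_zero (mem_univ i) (by simp)
  have hx : ∀ i, x i ^ r = -∑ k ∈ Finset.range r, p.coeff k * x i ^ k := by
    intro i
    have h1 := hevalzero i
    rw [Polynomial.eval_eq_sum_range' (by rw [hdeg]; exact Nat.lt_succ_self r)] at h1
    rw [Finset.sum_range_succ] at h1
    have hc : p.coeff r = 1 := by rw [← hdeg]; exact hmon.coeff_natDegree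
    rw [hc, one_mul] at h1
    exact eq_neg_of_add_eq_zero_right h1
  set Q : Fin r → F := fun i => ∏ j ∈ Finset.univ.erase j0, a i j ^ m j with hQdef
  have prodlemma : ∀ (i : Fin r) (v : ℕ),
      ∏ j, a i j ^ (Function.update m j0 v j) = x i ^ v * Q i := by
    intro i v
    rw [← Finset.mul_prod_erase Finset.univ _ (mem_univ j0)]
    congr 1
    · simp [hxdef]
    · exact Finset.prod_congr rfl fun j hj => by
        rw [Function.update_of_ne (Finset.ne_of_mem_erase hj)]
  have weightlemma : ∀ k, k < r →
      (∑ j, (j.1 + 1) * (Function.update m j0 (m j0 - r + k) j)) < n := by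
    intro k hk
    have e1 : ∀ (v : ℕ), (∑ j, (j.1 + 1) * (Function.update m j0 v j))
        = (j0.1 + 1) * v + ∑ j ∈ Finset.univ.erase j0, (j.1 + 1) * m j := by
      intro v
      rw [← Finset.add_sum_erase Finset.univ _ (mem_univ j0)]
      congr 1
      · simp
      · exact Finset.sum_congr rfl fun j hj => by
          rw [Function.update_of_ne (Finset.ne_of_mem_erase hj)]
    have e2 : n = (j0.1 + 1) * m j0 + ∑ j ∈ Finset.univ.erase j0, (j.1 + 1) * m j := by
      have h3 := Finset.add_sum_erase Finset.univ (fun j : Fin n => (j.1 + 1) * m j)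
        (mem_univ j0)
      omega
    rw [e1]
    have hlt : m j0 - r + k < m j0 := by omega
    have : (j0.1 + 1) * (m j0 - r + k) < (j0.1 + 1) * m j0 :=
      (Nat.mul_lt_mul_left (Nat.succ_pos _)).mpr hlt
    omega
  -- main computation
  apply hGamma
  have key : ∀ i : Fin r, μ i * ∏ j, a i j ^ m j
      = ∑ k ∈ Finset.range r,
          -(p.coeff k * (μ i * ∏ j, a i j ^ (Function.update m j0 (m j0 - r + k) j))) := by
    intro i
    have e1 : ∏ j, a i j ^ m j = x i ^ (m j0) * Q i := by
      have := prodlemma i (m j0)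
      simpa [Function.update_eq_self] using this
    have e2 : x i ^ (m j0) = x i ^ (m j0 - r) * x i ^ r := by
      rw [← pow_add, Nat.sub_add_cancel hr]
    calc μ i * ∏ j, a i j ^ m j
        = μ i * (x i ^ (m j0 - r) * Q i) * x i ^ r := by rw [e1, e2]; ring
      _ = ∑ k ∈ Finset.range r,
            -(p.coeff k * (μ i * (x i ^ (m j0 - r) * x i ^ k * Q i))) := by
          rw [hx i, mul_neg, Finset.mul_sum, ← Finset.sum_neg_distrib]
          exact Finset.sum_congr rfl fun k _ => by ring
      _ = ∑ k ∈ Finset.range r,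
            -(p.coeff k * (μ i * ∏ j, a i j ^ (Function.update m j0 (m j0 - r + k) j))) :=
          Finset.sum_congr rfl fun k _ => by rw [prodlemma i (m j0 - r + k), pow_add]
  calc ∑ i, μ i * ∏ j, a i j ^ m j
      = ∑ i, ∑ k ∈ Finset.range r,
          -(p.coeff k * (μ i * ∏ j, a i j ^ (Function.update m j0 (m j0 - r + k) j))) :=
        Finset.sum_congr rfl fun i _ => key i
    _ = ∑ k ∈ Finset.range r,
          -(p.coeff k * ∑ i, μ i * ∏ j, a i j ^ (Function.update m j0 (m j0 - r + k) j)) := by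
        rw [Finset.sum_comm]
        exact Finset.sum_congr rfl fun k _ => by
          rw [Finset.mul_sum, ← Finset.sum_neg_distrib]
    _ = 0 := by
        apply Finset.sum_eq_zero
        intro k hk
        rw [hstable _ (weightlemma k (Finset.mem_range.mp hk))]
        simp
end

section
/- Let F be a finite field and let {P_1,…,P_r} be a stable weighted set over F (with n characteristic numbers per point). If there exists a partition λ = (1^{m_1(λ)} 2^{m_2(λ)} ⋯ n^{m_n(λ)}) of weight n such that m(λ) ≥ |F|, where |F| is the cardinality of F, then Γ(λ) = 0. -/
/-- A weighted set over a *finite* field `F` with `r` points, each with coefficient `μ i`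
and characteristic numbers `a i j` (`j = 1, …, n`, indexed by `Fin n`). A partition
`λ = (1^{m 0} 2^{m 1} ⋯ n^{m (n-1)})` is a multiplicity vector `m : Fin n → ℕ`,
its weight is `∑ j, (j+1) * m j`, and `m(λ) = Finset.univ.sup m`.
Stability: `Γ(λ) = ∑ i, μ i * ∏ j, (a i j)^(m j) = 0` for all partitions of weight `< n`.

**Statement 2 (Corollary 1.4):** if `λ` has weight `n` and `m(λ) ≥ |F|`, then `Γ(λ) = 0`. -/
theorem stable_weighted_set_finite_field_vanishing
    {F : Type*} [Field F] [Fintype F] (n r : ℕ)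
    (μ : Fin r → F) (a : Fin r → Fin n → F)
    (hstable : ∀ m : Fin n → ℕ, (∑ j, (j.1 + 1) * m j) < n →
      ∑ i, μ i * ∏ j, (a i j) ^ (m j) = 0)
    (m : Fin n → ℕ)
    (hweight : (∑ j, (j.1 + 1) * m j) = n)
    (hmax : Fintype.card F ≤ Finset.univ.sup m) :
    ∑ i, μ i * ∏ j, (a i j) ^ (m j) = 0 := by
  set q := Fintype.card F with hqdef
  have hq2 : 2 ≤ q := Fintype.one_lt_card
  -- univ nonempty
  have hne : (Finset.univ : Finset (Fin n)).Nonempty := by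
    by_contra h
    rw [Finset.not_nonempty_iff_eq_empty] at h
    rw [h] at hmax
    simp at hmax
    omega
  obtain ⟨j0, -, hj0⟩ := Finset.exists_mem_eq_sup Finset.univ hne m
  have hmj0 : q ≤ m j0 := hj0 ▸ hmax
  set m' : Fin n → ℕ := Function.update m j0 (m j0 - (q - 1)) with hm'
  have hkey : ∀ x : F, x ^ m j0 = x ^ (m j0 - (q - 1)) := by
    intro x
    by_cases hx : x = 0
    · subst hx
      rw [zero_pow (by omega), zero_pow (by omega)]
    · have h1 : m j0 = (m j0 - (q - 1)) + (q - 1) := by omega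
      conv_lhs => rw [h1]
      rw [pow_add, FiniteField.pow_card_sub_one_eq_one x hx, mul_one]
  have hprod : ∀ i, ∏ j, (a i j) ^ (m j) = ∏ j, (a i j) ^ (m' j) := by
    intro i
    refine Finset.prod_congr rfl fun j _ => ?_
    by_cases hj : j = j0
    · subst hj; rw [hm', Function.update_self, hkey]
    · rw [hm', Function.update_of_ne hj]
  have hw' : (∑ j, (j.1 + 1) * m' j) < n := by
    have h1 : ∑ j, (j.1 + 1) * m' j + (j0.1 + 1) * (q - 1) = ∑ j, (j.1 + 1) * m j := by
      rw [← Finset.sum_erase_add _ _ (Finset.mem_univ j0),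
          ← Finset.sum_erase_add _ (fun j => (j.1 + 1) * m j) (Finset.mem_univ j0)]
      have he : ∑ j ∈ Finset.univ.erase j0, (j.1 + 1) * m' j
          = ∑ j ∈ Finset.univ.erase j0, (j.1 + 1) * m j := by
        refine Finset.sum_congr rfl fun j hj => ?_
        rw [hm', Function.update_of_ne (Finset.ne_of_mem_erase hj)]
      rw [he, hm', Function.update_self]
      have : (j0.1 + 1) * (m j0 - (q - 1)) + (j0.1 + 1) * (q - 1) = (j0.1 + 1) * m j0 := by
        rw [← Nat.mul_add]
        congr 1
        omega
      omega
    have h2 : 1 ≤ (j0.1 + 1) * (q - 1) := Nat.mul_pos (by omega) (by omega)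
    omega
  calc ∑ i, μ i * ∏ j, (a i j) ^ (m j) = ∑ i, μ i * ∏ j, (a i j) ^ (m' j) := by
        exact Finset.sum_congr rfl fun i _ => by rw [hprod]
    _ = 0 := hstable m' hw'
end

section
/- Let F be a finite field and let {P_1,…,P_r} be a stable weighted set over F (with n characteristic numbers per point). If λ is a partition of weight n with Γ(λ) ≠ 0, then |F| ≥ m(λ) + 1, where |F| is the cardinality of F. Equivalently, setting m := max{m(λ) : λ a partition of weight n with Γ(λ) ≠ 0}, one has |F| ≥ m + 1. -/
/-- A weighted set over a *finite* field `F` with `r` points, each with coefficient `μ i`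
and characteristic numbers `a i j` (`j = 1, …, n`, indexed by `Fin n`). A partition
`λ = (1^{m 0} 2^{m 1} ⋯ n^{m (n-1)})` is a multiplicity vector `m : Fin n → ℕ`,
its weight is `∑ j, (j+1) * m j`, and `m(λ) = Finset.univ.sup m`.
Stability: `Γ(λ) = ∑ i, μ i * ∏ j, (a i j)^(m j) = 0` for all partitions of weight `< n`.

**Statement 3 (Corollary 1.5):** if `λ` has weight `n` and `Γ(λ) ≠ 0`, then
`|F| ≥ m(λ) + 1`. -/
theorem stable_weighted_set_finite_field_card_lower_bound
    {F : Type*} [Field F] [Fintype F] (n r : ℕ)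
    (μ : Fin r → F) (a : Fin r → Fin n → F)
    (hstable : ∀ m : Fin n → ℕ, (∑ j, (j.1 + 1) * m j) < n →
      ∑ i, μ i * ∏ j, (a i j) ^ (m j) = 0)
    (m : Fin n → ℕ)
    (hweight : (∑ j, (j.1 + 1) * m j) = n)
    (hGamma : ∑ i, μ i * ∏ j, (a i j) ^ (m j) ≠ 0) :
    Finset.univ.sup m + 1 ≤ Fintype.card F := by
  by_contra h
  push_neg at h
  set q := Fintype.card F with hq
  have hq1 : 1 < q := Fintype.one_lt_card
  have hsup : q ≤ Finset.univ.sup m := by omega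
  have hn : n ≠ 0 := by
    rintro rfl
    simp [Finset.sup] at hsup
    omega
  have : Nonempty (Fin n) := ⟨⟨0, Nat.pos_of_ne_zero hn⟩⟩
  obtain ⟨j0, -, hj0⟩ := Finset.exists_mem_eq_sup Finset.univ Finset.univ_nonempty m
  have hmj0 : q ≤ m j0 := hj0 ▸ hsup
  set m' : Fin n → ℕ := Function.update m j0 (m j0 - (q - 1)) with hm'
  have key : ∀ x : F, x ^ (m j0) = x ^ (m j0 - (q - 1)) := by
    intro x
    rcases eq_or_ne x 0 with rfl | hx
    · rw [zero_pow (by omega), zero_pow (by omega)]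
    · have h1 : x ^ (q - 1) = 1 := FiniteField.pow_card_sub_one_eq_one x hx
      calc x ^ m j0 = x ^ (m j0 - (q - 1)) * x ^ (q - 1) := by
            rw [← pow_add]; congr 1; omega
        _ = x ^ (m j0 - (q - 1)) := by rw [h1, mul_one]
  have hprod : ∀ i, ∏ j, a i j ^ m' j = ∏ j, a i j ^ m j := by
    intro i
    refine Finset.prod_congr rfl fun j _ => ?_
    by_cases hj : j = j0
    · subst hj; rw [hm', Function.update_self, ← key]
    · rw [hm', Function.update_of_ne hj]
  have hw : (∑ j, (j.1 + 1) * m' j) < n := by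
    have hlt : (∑ j, (j.1 + 1) * m' j) < ∑ j, (j.1 + 1) * m j := by
      refine Finset.sum_lt_sum (fun j _ => ?_) ⟨j0, Finset.mem_univ _, ?_⟩
      · by_cases hj : j = j0
        · subst hj
          rw [hm', Function.update_self]
          exact Nat.mul_le_mul_left _ (by omega)
        · rw [hm', Function.update_of_ne hj]
      · rw [hm', Function.update_self]
        exact Nat.mul_lt_mul_of_pos_left (by omega) (Nat.succ_pos _)
    omega
  have := hstable m' hw
  apply hGamma
  rw [← this]
  exact Finset.sum_congr rfl fun i _ => by rw [hprod]
end

section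
/- Let F be a field, let {P_1,…,P_r} be a stable weighted set over F (with n characteristic numbers per point), and let λ = (1^{m_1(λ)} 2^{m_2(λ)} ⋯ n^{m_n(λ)}) be a partition of weight n with m_1(λ) = m(λ) ≥ r. Then for every element s ∈ F in the set {a_1^{(i)} : 1 ≤ i ≤ r} of first characteristic numbers, the partial sum A(s) := ∑_{i : a_1^{(i)} = s} μ_i · (a_2^{(i)})^{m_2(λ)} (a_3^{(i)})^{m_3(λ)} ⋯ (a_n^{(i)})^{m_n(λ)} vanishes. -/
/-- A weighted set over a field `F` with `r` points, each with coefficient `μ i` and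
characteristic numbers `a i j` (`j = 1, …, n`, indexed by `Fin n`; the first
characteristic number of `P i` is `a i ⟨0, hn⟩`). A partition
`λ = (1^{m 0} 2^{m 1} ⋯ n^{m (n-1)})` is a multiplicity vector `m : Fin n → ℕ`,
its weight is `∑ j, (j+1) * m j`, and `m(λ) = Finset.univ.sup m`.
Stability: `Γ(λ) = ∑ i, μ i * ∏ j, (a i j)^(m j) = 0` for all partitions of weight `< n`.

**Statement 4 (key step in the proof of Proposition 1.1):** if `λ` has weight `n`,
`m_1(λ) = m(λ) ≥ r`, then for every value `s` attained by the first characteristic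
numbers, the partial sum
`A(s) = ∑_{i : a_1^{(i)} = s} μ i * (a_2^{(i)})^{m_2} ⋯ (a_n^{(i)})^{m_n}` vanishes. -/
theorem stable_weighted_set_partial_sums_vanish
    {F : Type*} [Field F] [DecidableEq F] (n r : ℕ) (hn : 0 < n)
    (μ : Fin r → F) (a : Fin r → Fin n → F)
    (hstable : ∀ m : Fin n → ℕ, (∑ j, (j.1 + 1) * m j) < n →
      ∑ i, μ i * ∏ j, (a i j) ^ (m j) = 0)
    (m : Fin n → ℕ)
    (hweight : (∑ j, (j.1 + 1) * m j) = n)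
    (hm1 : m ⟨0, hn⟩ = Finset.univ.sup m)
    (hmax : r ≤ m ⟨0, hn⟩) :
    ∀ s : F, (∃ i : Fin r, a i ⟨0, hn⟩ = s) →
      ∑ i ∈ Finset.univ.filter (fun i : Fin r => a i ⟨0, hn⟩ = s),
        μ i * ∏ j ∈ Finset.univ.erase ⟨0, hn⟩, (a i j) ^ (m j) = 0 := by
  intro s0 hs0
  set z : Fin n := ⟨0, hn⟩ with hz
  set S : Finset F := Finset.univ.image (fun i => a i z) with hS
  set A : F → F := fun s => ∑ i ∈ Finset.univ.filter (fun i : Fin r => a i z = s),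
      μ i * ∏ j ∈ Finset.univ.erase z, (a i j) ^ (m j) with hA
  -- Step 1: power sums vanish
  have key : ∀ k < m z, ∑ s ∈ S, A s * s ^ k = 0 := by
    intro k hk
    have hw' : (∑ j, (j.1 + 1) * (Function.update m z k j)) < n := by
      rw [← Finset.sum_erase_add _ _ (Finset.mem_univ z)] at hweight ⊢
      have h1 : ∀ j ∈ Finset.univ.erase z, (j.1 + 1) * (Function.update m z k j)
          = (j.1 + 1) * m j := by
        intro j hj
        rw [Function.update_of_ne (Finset.mem_erase.mp hj).1]
      rw [Finset.sum_congr rfl h1, Function.update_self]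
      have h0 : ((⟨0, hn⟩ : Fin n) : ℕ) = 0 := rfl
      simp only [hz, h0] at hweight hk ⊢
      omega
    have h0 := hstable _ hw'
    have h2 : ∀ i : Fin r, μ i * ∏ j, (a i j) ^ (Function.update m z k j)
        = (a i z) ^ k * (μ i * ∏ j ∈ Finset.univ.erase z, (a i j) ^ (m j)) := by
      intro i
      rw [← Finset.mul_prod_erase _ _ (Finset.mem_univ z), Function.update_self]
      have : ∀ j ∈ Finset.univ.erase z, (a i j) ^ (Function.update m z k j)
          = (a i j) ^ (m j) := fun j hj => by
        rw [Function.update_of_ne (Finset.mem_erase.mp hj).1]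
      rw [Finset.prod_congr rfl this]; ring
    rw [Finset.sum_congr rfl (fun i _ => h2 i)] at h0
    rw [← h0]
    rw [← Finset.sum_fiberwise_of_maps_to (g := fun i : Fin r => a i z)
      (fun i _ => Finset.mem_image_of_mem _ (Finset.mem_univ i))]
    refine Finset.sum_congr rfl fun s hs => ?_
    rw [hA]
    simp only [Finset.sum_mul, Finset.mul_sum]
    refine Finset.sum_congr rfl fun i hi => ?_
    have : a i z = s := (Finset.mem_filter.mp hi).2
    rw [this]; ring
  -- Step 2: evaluations against low-degree polynomials vanish
  have poly : ∀ p : Polynomial F, p.natDegree < m z → ∑ s ∈ S, A s * p.eval s = 0 := by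
    intro p hp
    have : ∀ s : F, p.eval s = ∑ k ∈ Finset.range (m z), p.coeff k * s ^ k := by
      intro s
      exact Polynomial.eval_eq_sum_range' hp s
    simp_rw [this, Finset.mul_sum]
    rw [Finset.sum_comm]
    refine Finset.sum_eq_zero fun k hk => ?_
    have := key k (Finset.mem_range.mp hk)
    calc ∑ s ∈ S, A s * (p.coeff k * s ^ k)
        = p.coeff k * ∑ s ∈ S, A s * s ^ k := by rw [Finset.mul_sum]; congr 1; ext s; ring
      _ = 0 := by rw [this, mul_zero]
  -- Step 3: apply with Lagrange basis polynomial at s0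
  obtain ⟨i0, hi0⟩ := hs0
  have hs0S : s0 ∈ S := hi0 ▸ Finset.mem_image_of_mem _ (Finset.mem_univ i0)
  have hinj : Set.InjOn (id : F → F) S := Function.injective_id.injOn
  have hcard : S.card ≤ r := le_trans (Finset.card_image_le) (by simp)
  have hdeg : (Lagrange.basis S id s0).natDegree < m z := by
    rw [Lagrange.natDegree_basis hinj hs0S]
    have : 1 ≤ S.card := Finset.card_pos.mpr ⟨s0, hs0S⟩
    omega
  have := poly _ hdeg
  rw [Finset.sum_eq_single s0 (fun s hs hne => by
      have h : (Lagrange.basis S id s0).eval (id s) = 0 :=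
        Lagrange.eval_basis_of_ne (Ne.symm hne) hs
      simp only [id] at h
      rw [h, mul_zero])
    (fun h => absurd hs0S h)] at this
  have he : (Lagrange.basis S id s0).eval (id s0) = 1 := Lagrange.eval_basis_self hinj hs0S
  simp only [id] at he
  rw [he, mul_one] at this
  exact this
end

section
/- (Algebraic core of the paper's Theorem 2.2, via the Bott residue formula.) Let n, r ≥ 1 and suppose given nonzero integers k_1^{(i)},…,k_{2n}^{(i)} ∈ ℤ∖{0} for each i = 1,…,r (rotation numbers at the fixed points), and an integer P_λ for each partition λ of weight at most n (the Pontrjagin numbers). Define, as rational numbers, μ_i := 1/∏_{j=1}^{2n} k_j^{(i)} and a_j^{(i)} := e_j((k_1^{(i)})², …, (k_{2n}^{(i)})²) for 1 ≤ j ≤ n, where e_j is the j-th elementary symmetric polynomial. Assume the localization identities ∑_{i=1}^r μ_i · a_λ^{(i)} = P_λ hold for every partition λ of weight at most n, and that P_λ = 0 whenever the weight of λ is strictly less than n. If λ is a partition of weight n with P_λ ≠ 0, then r ≥ m(λ) + 1. -/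
/-!
Fix a part size `j₀` of `λ` and let only its multiplicity `t` vary, the others staying at those
of `λ`. The localization sums then take the form `∑ᵢ cᵢ xᵢ ^ t` with `xᵢ = a_{j₀}^{(i)}`. For
`t < m_{j₀}(λ)` the weight drops below `n`, so these sums vanish. If `r ≤ m_{j₀}(λ)`, they
vanish for all `t < r`, and reducing `X ^ t` modulo `∏ᵢ (X - xᵢ)`, a monic polynomial of degree
`r`, shows that they vanish for every `t`, in particular `P_λ = 0`.
-/

open Polynomial Finset

section PowerSums

variable {R ι : Type*} [CommRing R] [Fintype ι] (c x : ι → R)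

theorem sum_mul_eval_eq_zero_of_natDegree_lt_card
    (h : ∀ t < Fintype.card ι, ∑ i, c i * x i ^ t = 0) {f : R[X]}
    (hf : f.natDegree < Fintype.card ι) : ∑ i, c i * f.eval (x i) = 0 := by
  simp_rw [eval_eq_sum_range' hf, mul_sum]
  rw [sum_comm]
  refine sum_eq_zero fun t ht => ?_
  simp_rw [mul_left_comm (c _)]
  rw [← mul_sum, h t (mem_range.1 ht), mul_zero]

theorem sum_mul_pow_eq_zero_of_forall_lt_card
    (h : ∀ t < Fintype.card ι, ∑ i, c i * x i ^ t = 0) (M : ℕ) :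
    ∑ i, c i * x i ^ M = 0 := by
  nontriviality R
  cases isEmpty_or_nonempty ι
  · simp
  set p : R[X] := ∏ i, (X - C (x i))
  have hp : p.Monic := monic_prod_of_monic _ _ fun i _ => monic_X_sub_C _
  have hp_natDegree : p.natDegree = Fintype.card ι := natDegree_finsetProd_X_sub_C_eq_card _ _
  have hp_ne_one : p ≠ 1 := fun h1 => by
    simp [h1, eq_comm (a := 0), Fintype.card_ne_zero] at hp_natDegree
  have hdeg : (X ^ M %ₘ p).natDegree < Fintype.card ι :=
    hp_natDegree ▸ natDegree_modByMonic_lt _ hp hp_ne_one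
  have heval (i : ι) : (X ^ M %ₘ p).eval (x i) = x i ^ M := by
    have hroot : p.eval (x i) = 0 := by simp [p, eval_prod, prod_eq_zero (mem_univ i)]
    simpa [hroot] using congrArg (eval (x i)) (modByMonic_add_div (X ^ M) p)
  simp_rw [← heval]
  exact sum_mul_eval_eq_zero_of_natDegree_lt_card c x h hdeg

end PowerSums

section Multiplicities

variable {R ι κ : Type*} [CommRing R] [Fintype ι] [Fintype κ] [DecidableEq κ]

theorem prod_pow_update {M : Type*} [CommMonoid M] (a : κ → M) (m : κ → ℕ) (j : κ) (t : ℕ) :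
    ∏ l, a l ^ Function.update m j t l = a j ^ t * ∏ l ∈ {j}ᶜ, a l ^ m l := by
  rw [Fintype.prod_eq_mul_prod_compl j, Function.update_self]
  congr 1
  refine prod_congr rfl fun l hl => ?_
  rw [Function.update_of_ne (by simpa using hl)]

theorem sum_mul_update_lt_sum_mul (w m : κ → ℕ) {j : κ} (hw : 0 < w j) {t : ℕ}
    (ht : t < m j) : ∑ l, w l * Function.update m j t l < ∑ l, w l * m l := by
  refine sum_lt_sum (fun l _ => ?_) ⟨j, mem_univ j, ?_⟩
  · rcases eq_or_ne l j with rfl | hl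
    · rw [Function.update_self]
      exact Nat.mul_le_mul_left _ ht.le
    · rw [Function.update_of_ne hl]
  · rw [Function.update_self]
    exact Nat.mul_lt_mul_of_pos_left ht hw

theorem sum_mul_prod_pow_eq_zero_of_card_le (μ : ι → R) (a : ι → κ → R) (m : κ → ℕ) {j : κ}
    (hj : Fintype.card ι ≤ m j)
    (h : ∀ t < m j, ∑ i, μ i * ∏ l, a i l ^ Function.update m j t l = 0) :
    ∑ i, μ i * ∏ l, a i l ^ m l = 0 := by
  set c : ι → R := fun i => μ i * ∏ l ∈ {j}ᶜ, a i l ^ m l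
  have hsummand (i : ι) (t : ℕ) :
      μ i * ∏ l, a i l ^ Function.update m j t l = c i * a i j ^ t := by
    rw [prod_pow_update]
    ring
  have hpow := sum_mul_pow_eq_zero_of_forall_lt_card c (a · j)
    (fun t ht => by simpa only [hsummand] using h t (ht.trans_le hj)) (m j)
  calc ∑ i, μ i * ∏ l, a i l ^ m l = ∑ i, c i * a i j ^ m j := by
        simpa only [Function.update_eq_self] using sum_congr rfl fun i _ => hsummand i (m j)
    _ = 0 := hpow

end Multiplicities

theorem circle_action_fixed_points_lower_bound_general
    (n r : ℕ) (hr : 1 ≤ r)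
    (P : (Fin n → ℕ) → ℤ)
    (μ : Fin r → ℚ) (a : Fin r → Fin n → ℚ)
    (hloc : ∀ m : Fin n → ℕ, (∑ j, (j.1 + 1) * m j) ≤ n →
      ∑ i, μ i * ∏ j, (a i j) ^ (m j) = (P m : ℚ))
    (hvanish : ∀ m : Fin n → ℕ, (∑ j, (j.1 + 1) * m j) < n → P m = 0)
    (m : Fin n → ℕ)
    (hweight : (∑ j, (j.1 + 1) * m j) = n)
    (hP : P m ≠ 0) :
    Finset.univ.sup m + 1 ≤ r := by
  have hm_lt (j : Fin n) : m j < r := by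
    by_contra! hj
    have hlower_weight (t : ℕ) (ht : t < m j) :
        ∑ l, (l.1 + 1) * Function.update m j t l < n :=
      (sum_mul_update_lt_sum_mul (fun l : Fin n => l.1 + 1) m j.1.succ_pos ht).trans_eq hweight
    have hzero := sum_mul_prod_pow_eq_zero_of_card_le μ a m (by simpa using hj) fun t ht => by
      rw [hloc _ (hlower_weight t ht).le, hvanish _ (hlower_weight t ht), Int.cast_zero]
    rw [hloc m hweight.le] at hzero
    exact hP (by exact_mod_cast hzero)
  exact (Finset.sup_lt_iff hr).2 fun j _ => hm_lt j

/-- **algebraic core of Theorem 2.2, via the Bott residue formula.**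
`k i j` (`j` ranging over `Fin (2*n)`) are the nonzero rotation numbers at the `i`-th
fixed point; `P m` is the Pontrjagin number attached to the partition with multiplicity
vector `m : Fin n → ℕ` (index `j` stands for part size `j+1`; weight is
`∑ j, (j+1) * m j`, `m(λ) = Finset.univ.sup m`). In `ℚ` define
`μ i = 1 / ∏ j, k i j` and `a i j = e_{j+1}((k i 1)², …, (k i (2n))²)`, where
`e_{j+1}` is the `(j+1)`-st elementary symmetric polynomial (written out as a sum over
subsets of cardinality `j+1`). Assuming the localization identities
`∑ i, μ i * ∏ j, (a i j)^(m j) = P m` for all partitions of weight `≤ n`, and that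
`P m = 0` for partitions of weight `< n`: if `λ` has weight `n` and `P λ ≠ 0`, then the
number of fixed points satisfies `r ≥ m(λ) + 1`. -/
theorem circle_action_fixed_points_lower_bound
    (n r : ℕ) (hn : 1 ≤ n) (hr : 1 ≤ r)
    (k : Fin r → Fin (2 * n) → ℤ)
    (hk : ∀ i j, k i j ≠ 0)
    (P : (Fin n → ℕ) → ℤ)
    (μ : Fin r → ℚ) (a : Fin r → Fin n → ℚ)
    (hμ : ∀ i, μ i = 1 / ∏ j, (k i j : ℚ))
    (ha : ∀ i (j : Fin n), a i j =
      ∑ S ∈ Finset.univ.powersetCard (j.1 + 1), ∏ t ∈ S, ((k i t : ℚ)) ^ 2)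
    (hloc : ∀ m : Fin n → ℕ, (∑ j, (j.1 + 1) * m j) ≤ n →
      ∑ i, μ i * ∏ j, (a i j) ^ (m j) = (P m : ℚ))
    (hvanish : ∀ m : Fin n → ℕ, (∑ j, (j.1 + 1) * m j) < n → P m = 0)
    (m : Fin n → ℕ)
    (hweight : (∑ j, (j.1 + 1) * m j) = n)
    (hP : P m ≠ 0) :
    Finset.univ.sup m + 1 ≤ r :=
  circle_action_fixed_points_lower_bound_general n r hr P μ a hloc hvanish m hweight hP
end

section
/- (Algebraic core of the paper's Theorem 3.4, an obstruction to ℤ_p actions with isolated fixed points.) Let p be a prime, n, r ≥ 1, and suppose given for each i = 1,…,r nonzero elements k_1^{(i)},…,k_n^{(i)} ∈ ℤ/pℤ ∖ {0} and a sign ε_i ∈ {+1, −1}, and an integer C_λ for each partition λ of weight at most n. Define in ℤ/pℤ: μ_i := ε_i · (∏_{j=1}^n k_j^{(i)})^{−1} and a_j^{(i)} := e_j(k_1^{(i)},…,k_n^{(i)}) for 1 ≤ j ≤ n, where e_j is the j-th elementary symmetric polynomial. Assume the congruences ∑_{i=1}^r μ_i · a_λ^{(i)} ≡ C_λ (mod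 p) hold for every partition λ of weight at most n, and that C_λ = 0 whenever the weight of λ is strictly less than n. If λ is a partition of weight n such that C_λ is not divisible by p, then p ≥ m(λ) + 1. In particular, setting m := max{m(λ) : λ of weight n, p ∤ C_λ}, one has p ≥ m + 1. -/
/-- **algebraic core of Theorem 3.4, an obstruction to `ℤ_p`-actions
with isolated fixed points.** `p` is a prime; `k i j` (`j` ranging over `Fin n`) are
the nonzero weights in `ℤ/pℤ` at the `i`-th fixed point; `ε i = ±1`; `C m` is the Chern
number attached to the partition with multiplicity vector `m : Fin n → ℕ` (index `j`
stands for part size `j+1`; weight is `∑ j, (j+1) * m j`, `m(λ) = Finset.univ.sup m`).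
In `ℤ/pℤ` define `μ i = ε i * (∏ j, k i j)⁻¹` and `a i j = e_{j+1}(k i 1, …, k i n)`,
where `e_{j+1}` is the `(j+1)`-st elementary symmetric polynomial (written out as a sum
over subsets of cardinality `j+1`). Assuming Kosniowski's congruences
`∑ i, μ i * ∏ j, (a i j)^(m j) = C m (mod p)` for all partitions of weight `≤ n`, and
that `C m = 0` for partitions of weight `< n`: if `λ` has weight `n` and `p ∤ C λ`,
then `p ≥ m(λ) + 1`. -/
theorem zmod_p_action_prime_lower_bound
    (p : ℕ) (hp : p.Prime) (n r : ℕ) (hn : 1 ≤ n) (hr : 1 ≤ r)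
    (k : Fin r → Fin n → ZMod p)
    (hk : ∀ i j, k i j ≠ 0)
    (ε : Fin r → ℤ)
    (hε : ∀ i, ε i = 1 ∨ ε i = -1)
    (C : (Fin n → ℕ) → ℤ)
    (μ : Fin r → ZMod p) (a : Fin r → Fin n → ZMod p)
    (hμ : ∀ i, μ i = (ε i : ZMod p) * (∏ j, k i j)⁻¹)
    (ha : ∀ i (j : Fin n), a i j =
      ∑ S ∈ Finset.univ.powersetCard (j.1 + 1), ∏ t ∈ S, k i t)
    (hloc : ∀ m : Fin n → ℕ, (∑ j, (j.1 + 1) * m j) ≤ n →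
      ∑ i, μ i * ∏ j, (a i j) ^ (m j) = (C m : ZMod p))
    (hvanish : ∀ m : Fin n → ℕ, (∑ j, (j.1 + 1) * m j) < n → C m = 0)
    (m : Fin n → ℕ)
    (hweight : (∑ j, (j.1 + 1) * m j) = n)
    (hC : ¬ (p : ℤ) ∣ C m) :
    Finset.univ.sup m + 1 ≤ p := by

  by_contra h
  push_neg at h
  have hsup : p ≤ Finset.univ.sup m := Nat.lt_succ_iff.mp h
  haveI : Fact p.Prime := ⟨hp⟩
  have hne : (Finset.univ : Finset (Fin n)).Nonempty := ⟨⟨0, hn⟩, Finset.mem_univ _⟩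
  obtain ⟨j, -, hj⟩ := Finset.exists_mem_eq_sup Finset.univ hne m
  have hmj : p ≤ m j := hj ▸ hsup
  have hp2 : 2 ≤ p := hp.two_le
  set m' := Function.update m j (m j - (p - 1)) with hm'
  have hkey : ∀ (x : ZMod p), x ^ (m j) = x ^ (m j - (p - 1)) := by
    intro x
    have he : m j = (m j - (p - 1)) + (p - 1) := by omega
    nth_rewrite 1 [he]
    rcases eq_or_ne x 0 with hx | hx
    · rw [hx, zero_pow (by omega), zero_pow (by omega)]
    · rw [pow_add, ZMod.pow_card_sub_one_eq_one hx, mul_one]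
  have hprod : ∀ i, (∏ t, (a i t) ^ (m t)) = ∏ t, (a i t) ^ (m' t) := by
    intro i
    refine Finset.prod_congr rfl fun t _ => ?_
    rcases eq_or_ne t j with rfl | ht
    · rw [hm', Function.update_self, hkey]
    · rw [hm', Function.update_of_ne ht]
  have hsplit : ∀ (f : Fin n → ℕ), (∑ t, (t.1 + 1) * f t) =
      (j.1 + 1) * f j + ∑ t ∈ Finset.univ.erase j, (t.1 + 1) * f t := by
    intro f
    exact (Finset.add_sum_erase _ _ (Finset.mem_univ j)).symm
  have hw' : (∑ t, (t.1 + 1) * m' t) < n := by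
    have heq : (∑ t ∈ Finset.univ.erase j, (t.1 + 1) * m' t) =
        ∑ t ∈ Finset.univ.erase j, (t.1 + 1) * m t := by
      refine Finset.sum_congr rfl fun t ht => ?_
      rw [hm', Function.update_of_ne (Finset.ne_of_mem_erase ht)]
    have hwm := hweight
    rw [hsplit m] at hwm
    rw [hsplit m', heq, hm', Function.update_self]
    have hlt : (j.1 + 1) * (m j - (p - 1)) < (j.1 + 1) * m j :=
      Nat.mul_lt_mul_of_pos_left (by omega) (by omega)
    omega
  have h1 := hloc m (le_of_eq hweight)
  have h2 := hloc m' (le_of_lt hw')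
  rw [hvanish m' hw'] at h2
  have hzero : (C m : ZMod p) = 0 := by
    rw [← h1, Finset.sum_congr rfl fun i _ => by rw [hprod i]]
    simpa using h2
  exact hC ((ZMod.intCast_zmod_eq_zero_iff_dvd _ _).mp hzero)
end
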